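/- arXiv:1610.03870 — 3 statements merged into one kernel-verified Lean document; each statement's English description precedes it below -/
import Mathlib

section
/- Let s ∈ Spin(1,n) ⊂ C⁺(q) for q = x₁² − x₂² − ⋯ − x_{n+1}², written s = Σ_M s_M e_M in the standard basis, and let φ_s(x) = s x s* be the induced isometry of H^n. Then cosh(d(e₁, φ_s(e₁))) = Σ_M s_M². -/
/-!
Write `e_M` for the standard basis and `⟨y⟩₀` for the coefficient of `e_∅ = 1` in `y`. The
generators anticommute and square to scalars, so `e_M e_N` is a multiple of `e_{M ∆ N}` and
`⟨e_M e_N⟩₀ = 0` for `M ≠ N`. Since `e_i e₁ e_i = e₁` for every generator, `e_M e₁ e_M* = e₁`;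
hence `⟨e_M e₁ e_N* e₁⟩₀ = δ_{MN}`, and taking scalar parts in `x e₁ = s e₁ s* e₁` gives
`x₁ = Σ_M s_M² ≥ 0`. Finally `q(x) = q(e₁) = 1`, so `x₁ ≥ 1` and `cosh d(e₁, x) = ⟨e₁, x⟩ = x₁`.
-/

open CliffordAlgebra
open scoped symmDiff

/-- The Minkowski bilinear form of signature `(1,n)` on `ℝ^{n+1}`. -/
noncomputable def mink {n : ℕ} (x y : Fin (n + 1) → ℝ) : ℝ :=
  x 0 * y 0 - ∑ i : Fin n, x i.succ * y i.succ

/-- The hyperbolic distance on the hyperboloid model: `cosh d(x,y) = ⟨x,y⟩`. -/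
noncomputable def hdist {n : ℕ} (x y : Fin (n + 1) → ℝ) : ℝ :=
  Real.log (mink x y + Real.sqrt ((mink x y) ^ 2 - 1))

/-- The base point `e₁ = (1,0,…,0)` of the hyperboloid model. -/
def basePt (n : ℕ) : Fin (n + 1) → ℝ := fun i => if i = 0 then 1 else 0

theorem hdist_eq_arcosh {n : ℕ} (x y : Fin (n + 1) → ℝ) :
    hdist x y = Real.arcosh (mink x y) :=
  rfl

theorem basePt_eq_single (n : ℕ) : basePt n = Pi.single 0 1 := by
  ext i
  by_cases hi : i = 0 <;> simp [basePt, hi]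

theorem mink_basePt_left {n : ℕ} (x : Fin (n + 1) → ℝ) : mink (basePt n) x = x 0 := by
  simp [mink, basePt, Fin.succ_ne_zero]

theorem Finset.insert_eq_singleton_symmDiff {α : Type*} [DecidableEq α] {a : α} {s : Finset α}
    (h : a ∉ s) : insert a s = {a} ∆ s := by
  rw [Finset.insert_eq, Finset.symmDiff_eq_union (Finset.disjoint_singleton_left.2 h)]

namespace CliffordAlgebra

variable {R σ : Type*} [CommRing R] [LinearOrder σ] {Q : QuadraticForm R (σ → R)}

def IsStandardBasis (b : Module.Basis (Finset σ) R (CliffordAlgebra Q)) : Prop :=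
  ∀ M : Finset σ, b M = ((M.sort (· ≤ ·)).map fun i => ι Q (Pi.single i 1)).prod

namespace IsStandardBasis

variable {b : Module.Basis (Finset σ) R (CliffordAlgebra Q)}

theorem basis_empty (hb : IsStandardBasis b) : b ∅ = 1 := by
  simp [hb ∅]

theorem basis_insert (hb : IsStandardBasis b) {a : σ} {M : Finset σ} (ha : ∀ x ∈ M, a < x) :
    b (insert a M) = ι Q (Pi.single a 1) * b M := by
  rw [hb, hb, Finset.sort_insert _ (fun x hx => (ha x hx).le) fun h => (ha a h).false,
    List.map_cons, List.prod_cons]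

theorem basis_singleton (hb : IsStandardBasis b) (a : σ) : b {a} = ι Q (Pi.single a 1) := by
  rw [← insert_empty_eq, hb.basis_insert (by simp), hb.basis_empty, mul_one]

theorem exists_ι_mul_basis (hb : IsStandardBasis b)
    (hQ : Pairwise fun i j : σ => Q.IsOrtho (Pi.single i 1) (Pi.single j 1))
    (a : σ) (M : Finset σ) :
    ∃ c : R, ι Q (Pi.single a 1) * b M = c • b ({a} ∆ M) := by
  induction M using Finset.induction_on_min with
  | empty =>
    refine ⟨1, ?_⟩
    rw [one_smul, ← Finset.bot_eq_empty, symmDiff_bot, Finset.bot_eq_empty, hb.basis_singleton,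
      hb.basis_empty, mul_one]
  | insert i T hi ih =>
    rcases lt_trichotomy a i with hai | rfl | hia
    · refine ⟨1, ?_⟩
      have hsd : {a} ∆ insert i T = insert a (insert i T) := by
        ext x; simp only [Finset.mem_symmDiff, Finset.mem_insert, Finset.mem_singleton]
        grind
      rw [one_smul, hsd, hb.basis_insert (M := insert i T)]
      simpa [hai] using fun x hx => hai.trans (hi x hx)
    · refine ⟨Q (Pi.single a 1), ?_⟩
      have hsd : {a} ∆ insert a T = T := by
        ext x; simp only [Finset.mem_symmDiff, Finset.mem_insert, Finset.mem_singleton]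
        grind
      rw [hsd, hb.basis_insert hi, ← mul_assoc, ι_sq_scalar, Algebra.smul_def]
    · obtain ⟨c, hc⟩ := ih
      refine ⟨-c, ?_⟩
      have hsd : {a} ∆ insert i T = insert i ({a} ∆ T) := by
        ext x; simp only [Finset.mem_symmDiff, Finset.mem_insert, Finset.mem_singleton]
        grind
      rw [hsd, hb.basis_insert hi, hb.basis_insert, ι_mul_ι_mul_of_isOrtho _ (hQ hia.ne'), hc,
        mul_smul_comm, neg_smul]
      intro x hx
      simp only [Finset.mem_symmDiff, Finset.mem_singleton] at hx
      grind

theorem exists_basis_mul_basis (hb : IsStandardBasis b)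
    (hQ : Pairwise fun i j : σ => Q.IsOrtho (Pi.single i 1) (Pi.single j 1)) (M N : Finset σ) :
    ∃ c : R, b M * b N = c • b (M ∆ N) := by
  induction M using Finset.induction_on_min with
  | empty =>
    exact ⟨1, by rw [hb.basis_empty, one_mul, one_smul, ← Finset.bot_eq_empty, bot_symmDiff]⟩
  | insert i T hi ih =>
    obtain ⟨c, hc⟩ := ih
    obtain ⟨c', hc'⟩ := hb.exists_ι_mul_basis hQ i (T ∆ N)
    refine ⟨c * c', ?_⟩
    rw [hb.basis_insert hi, mul_assoc, hc, mul_smul_comm, hc', smul_smul,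
      Finset.insert_eq_singleton_symmDiff fun h => (hi i h).false, symmDiff_assoc]

theorem exists_reverse_basis (hb : IsStandardBasis b)
    (hQ : Pairwise fun i j : σ => Q.IsOrtho (Pi.single i 1) (Pi.single j 1)) (M : Finset σ) :
    ∃ c : R, reverse (b M) = c • b M := by
  induction M using Finset.induction_on_min with
  | empty => exact ⟨1, by rw [hb.basis_empty, reverse.map_one, one_smul]⟩
  | insert i T hi ih =>
    obtain ⟨c, hc⟩ := ih
    obtain ⟨c', hc'⟩ := hb.exists_basis_mul_basis hQ T {i}
    refine ⟨c * c', ?_⟩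
    calc reverse (b (insert i T)) = reverse (b T) * b {i} := by
          rw [hb.basis_insert hi, reverse.map_mul, reverse_ι, hb.basis_singleton]
      _ = (c * c') • b (T ∆ {i}) := by rw [hc, smul_mul_assoc, hc', smul_smul]
      _ = (c * c') • b (insert i T) := by
          rw [symmDiff_comm, Finset.insert_eq_singleton_symmDiff fun h => (hi i h).false]

theorem repr_algebraMap_empty (hb : IsStandardBasis b) (r : R) :
    b.repr (algebraMap R _ r) ∅ = r := by
  rw [Algebra.algebraMap_eq_smul_one, ← hb.basis_empty, map_smul, b.repr_self]
  simp

theorem repr_basis_mul_basis_empty_of_ne (hb : IsStandardBasis b)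
    (hQ : Pairwise fun i j : σ => Q.IsOrtho (Pi.single i 1) (Pi.single j 1)) {M N : Finset σ}
    (h : M ≠ N) : b.repr (b M * b N) ∅ = 0 := by
  obtain ⟨c, hc⟩ := hb.exists_basis_mul_basis hQ M N
  rw [hc, map_smul, b.repr_self, Finsupp.smul_apply,
    Finsupp.single_eq_of_ne (by simpa [eq_comm] using h), smul_zero]

theorem repr_ι_mul_ι_single_empty [Fintype σ] (hb : IsStandardBasis b)
    (hQ : Pairwise fun i j : σ => Q.IsOrtho (Pi.single i 1) (Pi.single j 1))
    (x : σ → R) (k : σ) :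
    b.repr (ι Q x * ι Q (Pi.single k 1)) ∅ = x k * Q (Pi.single k 1) := by
  conv_lhs => rw [pi_eq_sum_univ' x]
  simp only [map_sum, map_smul, Finset.sum_mul, smul_mul_assoc, Finsupp.coe_finsetSum,
    Finset.sum_apply, Finsupp.smul_apply, smul_eq_mul]
  rw [Finset.sum_eq_single k]
  · rw [ι_sq_scalar, hb.repr_algebraMap_empty]
  · intro j _ hj
    rw [← hb.basis_singleton, ← hb.basis_singleton,
      hb.repr_basis_mul_basis_empty_of_ne hQ (by simpa using hj), mul_zero]
  · simp

end IsStandardBasis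

theorem algebraMap_eq_of_ι_eq_conj {M : Type*} [AddCommGroup M] [Module R M]
    {Q : QuadraticForm R M} {s : CliffordAlgebra Q} (hs : s * reverse s = 1)
    (hs' : reverse s * s = 1) {x v : M} (hx : ι Q x = s * ι Q v * reverse s) :
    algebraMap R (CliffordAlgebra Q) (Q x) = algebraMap R _ (Q v) := by
  rw [← ι_sq_scalar, hx]
  calc s * ι Q v * reverse s * (s * ι Q v * reverse s)
      = s * (ι Q v * ι Q v) * reverse s := by
        simp only [mul_assoc, ← mul_assoc (reverse s) s, hs', one_mul]
    _ = algebraMap R _ (Q v) := by rw [ι_sq_scalar, ← Algebra.commutes, mul_assoc, hs, mul_one]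

-- `reverse s * s = 1` comes for free: a finite-dimensional algebra is Artinian, hence
-- Dedekind-finite.
theorem IsStandardBasis.apply_eq_of_ι_eq_conj {K : Type*} [Field K] [Finite σ]
    {Q : QuadraticForm K (σ → K)} {b : Module.Basis (Finset σ) K (CliffordAlgebra Q)}
    (hb : IsStandardBasis b) {s : CliffordAlgebra Q} (hs : s * reverse s = 1) {x v : σ → K}
    (hx : ι Q x = s * ι Q v * reverse s) : Q x = Q v := by
  have := Module.Finite.of_basis b
  have := IsArtinianRing.of_finite K (CliffordAlgebra Q)
  have h := congrArg (b.repr · ∅) (algebraMap_eq_of_ι_eq_conj hs (mul_eq_one_comm.1 hs) hx)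
  simpa only [hb.repr_algebraMap_empty] using h

end CliffordAlgebra

section Minkowski

variable {n : ℕ} {Q : QuadraticForm ℝ (Fin (n + 1) → ℝ)}
  {b : Module.Basis (Finset (Fin (n + 1))) ℝ (CliffordAlgebra Q)}

theorem minkowski_single (hQ : ∀ x, Q x = x 0 ^ 2 - ∑ i : Fin n, x i.succ ^ 2)
    (a : Fin (n + 1)) :
    Q (Pi.single a 1) = if a = 0 then 1 else -1 := by
  cases a using Fin.cases with
  | zero => simp [hQ, Fin.succ_ne_zero]
  | succ j => simp [hQ, Pi.single_apply, Fin.succ_ne_zero]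

theorem minkowski_isOrtho_single (hQ : ∀ x, Q x = x 0 ^ 2 - ∑ i : Fin n, x i.succ ^ 2) :
    Pairwise fun i j : Fin (n + 1) => Q.IsOrtho (Pi.single i 1) (Pi.single j 1) := by
  intro i j hij
  have h : ∀ m, (Pi.single i 1 : Fin (n + 1) → ℝ) m *
      (Pi.single j 1 : Fin (n + 1) → ℝ) m = 0 :=
    fun m => by by_cases hm : m = i <;> simp [Pi.single_apply, hm, hij]
  rw [QuadraticMap.isOrtho_def, hQ, hQ, hQ]
  simp only [Pi.add_apply, add_sq, mul_assoc, h, mul_zero, add_zero, Finset.sum_add_distrib]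
  ring

theorem ι_single_mul_ι_zero_mul_ι_single
    (hQ : ∀ x, Q x = x 0 ^ 2 - ∑ i : Fin n, x i.succ ^ 2) (a : Fin (n + 1)) :
    ι Q (Pi.single a 1) * ι Q (Pi.single 0 1) * ι Q (Pi.single a 1) = ι Q (Pi.single 0 1) := by
  rcases eq_or_ne a 0 with rfl | ha
  · rw [ι_sq_scalar, minkowski_single hQ, if_pos rfl, map_one, one_mul]
  · rw [ι_mul_ι_comm_of_isOrtho (minkowski_isOrtho_single hQ ha), neg_mul, mul_assoc,
      ι_sq_scalar, minkowski_single hQ, if_neg ha, map_neg, map_one, mul_neg_one, neg_neg]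

theorem basis_mul_ι_zero_mul_reverse_basis (hb : IsStandardBasis b)
    (hQ : ∀ x, Q x = x 0 ^ 2 - ∑ i : Fin n, x i.succ ^ 2) (M : Finset (Fin (n + 1))) :
    b M * ι Q (Pi.single 0 1) * reverse (b M) = ι Q (Pi.single 0 1) := by
  induction M using Finset.induction_on_min with
  | empty => rw [hb.basis_empty, reverse.map_one, one_mul, mul_one]
  | insert i T hi ih =>
    rw [hb.basis_insert hi, reverse.map_mul, reverse_ι]
    calc _ = ι Q (Pi.single i 1) * (b T * ι Q (Pi.single 0 1) * reverse (b T)) *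
          ι Q (Pi.single i 1) := by simp only [mul_assoc]
      _ = _ := by rw [ih, ι_single_mul_ι_zero_mul_ι_single hQ]

theorem repr_basis_mul_ι_zero_mul_reverse_basis_mul_ι_zero (hb : IsStandardBasis b)
    (hQ : ∀ x, Q x = x 0 ^ 2 - ∑ i : Fin n, x i.succ ^ 2) (M N : Finset (Fin (n + 1))) :
    b.repr (b M * ι Q (Pi.single 0 1) * reverse (b N) * ι Q (Pi.single 0 1)) ∅ =
      if M = N then 1 else 0 := by
  have hQ' := minkowski_isOrtho_single hQ
  split_ifs with h
  · rw [h, basis_mul_ι_zero_mul_reverse_basis hb hQ, ι_sq_scalar, minkowski_single hQ,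
      if_pos rfl, hb.repr_algebraMap_empty]
  · obtain ⟨c, hc⟩ := hb.exists_reverse_basis hQ' N
    obtain ⟨cM, hM⟩ := hb.exists_basis_mul_basis hQ' M {0}
    obtain ⟨cN, hN⟩ := hb.exists_basis_mul_basis hQ' N {0}
    rw [hc, ← hb.basis_singleton, mul_assoc _ (c • b N), smul_mul_assoc, hM, hN]
    simp only [smul_mul_assoc, mul_smul_comm, map_smul, Finsupp.smul_apply,
      hb.repr_basis_mul_basis_empty_of_ne hQ' (symmDiff_left_inj.not.2 h), smul_zero]

theorem repr_mul_ι_zero_mul_reverse_mul_ι_zero (hb : IsStandardBasis b)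
    (hQ : ∀ x, Q x = x 0 ^ 2 - ∑ i : Fin n, x i.succ ^ 2) (s : CliffordAlgebra Q) :
    b.repr (s * ι Q (Pi.single 0 1) * reverse s * ι Q (Pi.single 0 1)) ∅ =
      ∑ M, b.repr s M ^ 2 := by
  conv_lhs => rw [← b.sum_repr s]
  simp only [map_sum, map_smul, Finset.sum_mul, Finset.mul_sum, smul_mul_assoc, mul_smul_comm,
    Finsupp.coe_finsetSum, Finset.sum_apply, Finsupp.smul_apply, smul_eq_mul,
    repr_basis_mul_ι_zero_mul_reverse_basis_mul_ι_zero hb hQ]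
  simp [sq]

end Minkowski

theorem cosh_dist_spin_image_basePt_general
    (n : ℕ) (Q : QuadraticForm ℝ (Fin (n + 1) → ℝ))
    (hQ : ∀ x, Q x = x 0 ^ 2 - ∑ i : Fin n, x i.succ ^ 2)
    (b : Module.Basis (Finset (Fin (n + 1))) ℝ (CliffordAlgebra Q))
    (hb : ∀ M : Finset (Fin (n + 1)),
      b M = ((M.sort (· ≤ ·)).map fun i => ι Q (Pi.single i 1)).prod)
    (s : CliffordAlgebra Q)
    (hsnorm : s * reverse s = 1)
    (x : Fin (n + 1) → ℝ)
    (hx : ι Q x = s * ι Q (basePt n) * reverse s) :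
    Real.cosh (hdist (basePt n) x) = ∑ M : Finset (Fin (n + 1)), (b.repr s M) ^ 2 := by
  have hb : IsStandardBasis b := hb
  rw [basePt_eq_single] at hx
  have hx0 : x 0 = ∑ M, b.repr s M ^ 2 := by
    have h := hb.repr_ι_mul_ι_single_empty (minkowski_isOrtho_single hQ) x 0
    rw [minkowski_single hQ, if_pos rfl, mul_one, hx,
      repr_mul_ι_zero_mul_reverse_mul_ι_zero hb hQ] at h
    exact h.symm
  have hQx : Q x = 1 := by
    rw [hb.apply_eq_of_ι_eq_conj hsnorm hx, minkowski_single hQ, if_pos rfl]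
  have hx1 : 1 ≤ x 0 := by
    have hpos : 0 ≤ x 0 := hx0 ▸ Finset.sum_nonneg fun M _ => sq_nonneg _
    have hsum : 0 ≤ ∑ i : Fin n, x i.succ ^ 2 := Finset.sum_nonneg fun i _ => sq_nonneg _
    nlinarith [hQ x]
  rw [hdist_eq_arcosh, mink_basePt_left, Real.cosh_arcosh hx1, hx0]

/-- For `s ∈ Spin(1,n) ⊂ C⁺(q)`, `q = x₁² − x₂² − ⋯ − x_{n+1}²`, written `s = Σ_M s_M e_M`
in the standard basis of the Clifford algebra, the isometry `φ_s(x) = s x s*` of the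
hyperboloid model satisfies `cosh (d(e₁, φ_s(e₁))) = Σ_M s_M²`. -/
theorem cosh_dist_spin_image_basePt
    (n : ℕ) (Q : QuadraticForm ℝ (Fin (n + 1) → ℝ))
    (hQ : ∀ x, Q x = x 0 ^ 2 - ∑ i : Fin n, x i.succ ^ 2)
    (b : Module.Basis (Finset (Fin (n + 1))) ℝ (CliffordAlgebra Q))
    (hb : ∀ M : Finset (Fin (n + 1)),
      b M = ((M.sort (· ≤ ·)).map fun i => ι Q (Pi.single i 1)).prod)
    (s : CliffordAlgebra Q)
    (hseven : s ∈ evenOdd Q 0)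
    (hsnorm : s * reverse s = 1)
    (hsE : ∀ v : Fin (n + 1) → ℝ, ∃ w, s * ι Q v * reverse s = ι Q w)
    (x : Fin (n + 1) → ℝ)
    (hx : ι Q x = s * ι Q (basePt n) * reverse s) :
    Real.cosh (hdist (basePt n) x) = ∑ M : Finset (Fin (n + 1)), (b.repr s M) ^ 2 :=
  cosh_dist_spin_image_basePt_general n Q hQ b hb s hsnorm x hx
end

section
/- For any s ∈ Spin(1,n) with |s_ℝ| ≥ 1, where s_ℝ is the scalar (real) part of s, and any x ∈ H^n, the displacement satisfies d(x, φ_s(x)) ≥ 2 log|s_ℝ|. -/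
/-!
Write `τ` for the scalar part and `e = ι x`. The form `(u, v) ↦ τ(e ũ e v)` is positive
semidefinite for every `x ∈ Hⁿ`: for `x = e₀` the blades are orthonormal for it, and in general
`v e₀ ṽ = (2 + 2 x₀) e` with `v = 1 + e e₀`, so `τ(e ũ e u)` is a positive multiple of
`τ(e₀ w̃ e₀ w)` with `w = ṽ u v`. Applied to `u - τ(u)`, this gives `τ(u)² ≤ τ(u ũ)` whenever
`e u e = u`. For `u = s + e s e` one has `τ(u) = 2 s_ℝ` and, since `ι y = s e s̃`,
`τ(u ũ) = 2 + 2⟨x, y⟩`; hence `cosh d(x, y) = ⟨x, y⟩ ≥ 2 s_ℝ² - 1 ≥ s_ℝ²`.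
-/

open CliffordAlgebra

/-- The hyperboloid model of hyperbolic `n`-space. -/
def Hyp (n : ℕ) : Set (Fin (n + 1) → ℝ) := {x | mink x x = 1 ∧ 0 < x 0}

theorem two_mul_log_abs_le_log_add_sqrt {a m : ℝ} (ha : 1 ≤ |a|) (hm : 2 * a ^ 2 - 1 ≤ m) :
    2 * Real.log |a| ≤ Real.log (m + √(m ^ 2 - 1)) := by
  have ha2 : 1 ≤ a ^ 2 := by nlinarith [sq_abs a]
  calc 2 * Real.log |a| = Real.log (a ^ 2) := by rw [← sq_abs, Real.log_pow]; norm_num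
    _ ≤ Real.log (m + √(m ^ 2 - 1)) :=
      Real.log_le_log (by positivity) (by nlinarith [Real.sqrt_nonneg (m ^ 2 - 1)])

namespace CliffordBlade

section Orthogonal

variable {R κ : Type*} [CommRing R] [LinearOrder κ] {Q : QuadraticForm R (κ → R)}

noncomputable def gen (Q : QuadraticForm R (κ → R)) (i : κ) : CliffordAlgebra Q :=
  ι Q (Pi.single i 1)

theorem reverse_gen (i : κ) : reverse (gen Q i) = gen Q i :=
  reverse_ι _

def IsBladeBasis (b : Module.Basis (Finset κ) R (CliffordAlgebra Q)) : Prop :=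
  ∀ M : Finset κ, b M = ((M.sort (· ≤ ·)).map (gen Q)).prod

noncomputable def scalarPart (b : Module.Basis (Finset κ) R (CliffordAlgebra Q)) :
    CliffordAlgebra Q →ₗ[R] R :=
  b.coord ∅

variable {b : Module.Basis (Finset κ) R (CliffordAlgebra Q)}

theorem IsBladeBasis.blade_empty (hb : IsBladeBasis b) : b ∅ = 1 := by
  rw [hb, Finset.sort_empty, List.map_nil, List.prod_nil]

theorem IsBladeBasis.blade_insert (hb : IsBladeBasis b) {a : κ} {M : Finset κ}
    (ha : ∀ x ∈ M, a < x) : b (insert a M) = gen Q a * b M := by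
  rw [hb, hb, Finset.sort_insert _ (fun x hx => (ha x hx).le) fun h => (ha a h).false,
    List.map_cons, List.prod_cons]

theorem IsBladeBasis.blade_singleton (hb : IsBladeBasis b) (i : κ) : b {i} = gen Q i := by
  rw [← insert_empty_eq, hb.blade_insert (by simp), hb.blade_empty, mul_one]

theorem gen_mul_gen_comm (hQ : Q.polarBilin.IsOrthoᵢ fun i : κ => Pi.single i 1)
    {i j : κ} (h : i ≠ j) : gen Q i * gen Q j = -(gen Q j * gen Q i) :=
  ι_mul_ι_comm_of_isOrtho (QuadraticMap.isOrtho_polarBilin.mp (hQ h))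

theorem gen_mul_blade (hQ : Q.polarBilin.IsOrthoᵢ fun i : κ => Pi.single i 1)
    (hb : IsBladeBasis b) (M : Finset κ) (i : κ) :
    ∃ c : R, gen Q i * b M = c • b (symmDiff {i} M) := by
  induction M using Finset.induction_on_min generalizing i with
  | empty =>
    refine ⟨1, ?_⟩
    rw [← Finset.bot_eq_empty, symmDiff_bot, hb.blade_singleton, Finset.bot_eq_empty,
      hb.blade_empty, mul_one, one_smul]
  | insert a M ha ih =>
    rw [hb.blade_insert ha]
    rcases lt_trichotomy i a with hia | rfl | hai
    · refine ⟨1, ?_⟩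
      have hiM : ∀ x ∈ insert a M, i < x := by
        simpa [hia] using fun x hx => hia.trans (ha x hx)
      rw [one_smul, ← hb.blade_insert ha, ← hb.blade_insert hiM]
      congr 1
      ext x; simp only [Finset.mem_symmDiff, Finset.mem_insert, Finset.mem_singleton]
      grind
    · refine ⟨Q (Pi.single i 1), ?_⟩
      rw [← mul_assoc, gen, ι_sq_scalar, ← Algebra.smul_def]
      congr 2
      ext x; simp only [Finset.mem_symmDiff, Finset.mem_insert, Finset.mem_singleton]
      grind
    · obtain ⟨c, hc⟩ := ih i
      refine ⟨-c, ?_⟩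
      rw [← mul_assoc, gen_mul_gen_comm hQ hai.ne', neg_mul, mul_assoc, hc, mul_smul_comm,
        neg_smul, ← hb.blade_insert]
      · congr 3
        ext x; simp only [Finset.mem_symmDiff, Finset.mem_insert, Finset.mem_singleton]
        grind
      · intro x hx
        simp only [Finset.mem_symmDiff, Finset.mem_singleton] at hx
        grind

theorem blade_mul_blade (hQ : Q.polarBilin.IsOrthoᵢ fun i : κ => Pi.single i 1)
    (hb : IsBladeBasis b) (M N : Finset κ) : ∃ c : R, b M * b N = c • b (symmDiff M N) := by
  induction M using Finset.induction_on_min with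
  | empty =>
    exact ⟨1, by rw [hb.blade_empty, one_mul, ← Finset.bot_eq_empty, bot_symmDiff, one_smul]⟩
  | insert a M ha ih =>
    obtain ⟨c, hc⟩ := ih
    obtain ⟨d, hd⟩ := gen_mul_blade hQ hb (symmDiff M N) a
    have hinsert : insert a M = symmDiff {a} M := by
      rw [Finset.symmDiff_eq_union (by simpa using fun h => (ha a h).false), Finset.insert_eq]
    refine ⟨c * d, ?_⟩
    rw [hb.blade_insert ha, mul_assoc, hc, mul_smul_comm, hd, smul_smul, mul_comm, hinsert,
      symmDiff_assoc]

theorem reverse_blade (hQ : Q.polarBilin.IsOrthoᵢ fun i : κ => Pi.single i 1)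
    (hb : IsBladeBasis b) (M : Finset κ) : ∃ c : R, reverse (b M) = c • b M := by
  induction M using Finset.induction_on_min with
  | empty => exact ⟨1, by rw [hb.blade_empty, reverse.map_one, one_smul]⟩
  | insert a M ha ih =>
    obtain ⟨c, hc⟩ := ih
    obtain ⟨d, hd⟩ := blade_mul_blade hQ hb M {a}
    have hM : symmDiff M {a} = insert a M := by
      rw [Finset.symmDiff_eq_union (by simpa using fun h => (ha a h).false), Finset.union_comm,
        Finset.insert_eq]
    refine ⟨c * d, ?_⟩
    rw [hb.blade_insert ha, reverse.map_mul, reverse_gen, hc, smul_mul_assoc,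
      ← hb.blade_singleton, hd, hM, smul_smul, hb.blade_insert ha, hb.blade_singleton]

theorem scalarPart_blade (M : Finset κ) : scalarPart b (b M) = if M = ∅ then 1 else 0 := by
  rw [scalarPart, Module.Basis.coord_apply, Module.Basis.repr_self, Finsupp.single_apply,
    eq_comm]

theorem scalarPart_one (hb : IsBladeBasis b) : scalarPart b 1 = 1 := by
  rw [← hb.blade_empty, scalarPart_blade, if_pos rfl]

theorem scalarPart_algebraMap (hb : IsBladeBasis b) (r : R) :
    scalarPart b (algebraMap R (CliffordAlgebra Q) r) = r := by
  rw [Algebra.algebraMap_eq_smul_one, map_smul, scalarPart_one hb, smul_eq_mul, mul_one]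

theorem scalarPart_blade_mul_blade
    (hQ : Q.polarBilin.IsOrthoᵢ fun i : κ => Pi.single i 1)
    (hb : IsBladeBasis b) {M N : Finset κ} (h : M ≠ N) : scalarPart b (b M * b N) = 0 := by
  obtain ⟨c, hc⟩ := blade_mul_blade hQ hb M N
  rw [hc, map_smul, scalarPart_blade, if_neg (by simpa using h), smul_zero]

theorem scalarPart_mul_comm (hQ : Q.polarBilin.IsOrthoᵢ fun i : κ => Pi.single i 1)
    (hb : IsBladeBasis b) (u v : CliffordAlgebra Q) :
    scalarPart b (u * v) = scalarPart b (v * u) := by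
  have hblade : ∀ M N, scalarPart b (b M * b N) = scalarPart b (b N * b M) := by
    intro M N
    rcases eq_or_ne M N with rfl | h
    · rfl
    · rw [scalarPart_blade_mul_blade hQ hb h, scalarPart_blade_mul_blade hQ hb h.symm]
  have : (LinearMap.mul R _).compr₂ (scalarPart b) =
      (LinearMap.mul R _).flip.compr₂ (scalarPart b) :=
    b.ext fun M => b.ext fun N => hblade M N
  exact LinearMap.congr_fun₂ this u v

theorem scalarPart_reverse (hQ : Q.polarBilin.IsOrthoᵢ fun i : κ => Pi.single i 1)
    (hb : IsBladeBasis b) (u : CliffordAlgebra Q) :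
    scalarPart b (reverse u) = scalarPart b u := by
  have hblade : ∀ M, scalarPart b (reverse (b M)) = scalarPart b (b M) := by
    intro M
    obtain ⟨c, hc⟩ := reverse_blade hQ hb M
    rcases eq_or_ne M ∅ with rfl | h
    · rw [hb.blade_empty, reverse.map_one]
    · rw [hc, map_smul, scalarPart_blade, if_neg h, smul_zero]
  exact LinearMap.congr_fun (b.ext (f₁ := (scalarPart b).comp reverse) hblade) u

theorem scalarPart_add_conj_mul_reverse
    (hQ : Q.polarBilin.IsOrthoᵢ fun i : κ => Pi.single i 1)
    (hb : IsBladeBasis b) {e : CliffordAlgebra Q} (he : e * e = 1) (hre : reverse e = e)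
    (u : CliffordAlgebra Q) :
    scalarPart b ((u + e * u * e) * reverse (u + e * u * e)) =
      2 * scalarPart b (u * reverse u) +
        scalarPart b (e * (u * e * reverse u) + u * e * reverse u * e) := by
  have hconj : scalarPart b (e * (u * reverse u) * e) = scalarPart b (u * reverse u) := by
    rw [scalarPart_mul_comm hQ hb, ← mul_assoc, he, one_mul]
  have hexpand : (u + e * u * e) * reverse (u + e * u * e) =
      u * reverse u + e * (u * reverse u) * e +
        (e * (u * e * reverse u) + u * e * reverse u * e) := by
    have he' : ∀ z, e * (e * z) = z := fun z => by rw [← mul_assoc, he, one_mul]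
    rw [map_add, reverse.map_mul, reverse.map_mul, hre]
    simp only [mul_add, add_mul, mul_assoc, he']
    abel
  rw [hexpand, map_add, map_add, hconj, two_mul]

end Orthogonal

section Minkowski

variable {n : ℕ} {Q : QuadraticForm ℝ (Fin (n + 1) → ℝ)}
  {b : Module.Basis (Finset (Fin (n + 1))) ℝ (CliffordAlgebra Q)}

def IsMinkowski (Q : QuadraticForm ℝ (Fin (n + 1) → ℝ)) : Prop :=
  ∀ x, Q x = x 0 ^ 2 - ∑ i : Fin n, x i.succ ^ 2

theorem IsMinkowski.apply_eq_mink (hQ : IsMinkowski Q) (x : Fin (n + 1) → ℝ) :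
    Q x = mink x x := by
  simp only [hQ x, mink, sq]

theorem IsMinkowski.polar_eq_mink (hQ : IsMinkowski Q) (x y : Fin (n + 1) → ℝ) :
    QuadraticMap.polar Q x y = 2 * mink x y := by
  simp only [QuadraticMap.polar, hQ.apply_eq_mink, mink, Pi.add_apply, add_mul, mul_add,
    Finset.sum_add_distrib]
  simp only [mul_comm (y _) (x _)]
  ring

theorem mink_single_zero (x : Fin (n + 1) → ℝ) : mink x (Pi.single 0 1) = x 0 := by
  simp [mink, Fin.succ_ne_zero]

theorem mink_single_single_of_ne {i j : Fin (n + 1)} (h : i ≠ j) :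
    mink (Pi.single i (1 : ℝ)) (Pi.single j 1) = 0 := by
  have hprod (k : Fin (n + 1)) :
      (Pi.single i 1 : Fin (n + 1) → ℝ) k * (Pi.single j 1 : Fin (n + 1) → ℝ) k = 0 := by
    rcases eq_or_ne k i with rfl | hk
    · simp [h]
    · simp [hk]
  simp [mink, hprod]

theorem IsMinkowski.apply_single (hQ : IsMinkowski Q) (i : Fin (n + 1)) :
    Q (Pi.single i 1) = if i = 0 then 1 else -1 := by
  cases i using Fin.cases with
  | zero => simp [hQ.apply_eq_mink, mink_single_zero]
  | succ j => simp [hQ.apply_eq_mink, mink, Pi.single_apply, Fin.succ_ne_zero]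

theorem IsMinkowski.isOrthoᵢ_single (hQ : IsMinkowski Q) :
    Q.polarBilin.IsOrthoᵢ fun i : Fin (n + 1) => Pi.single i 1 := fun _ _ h => by
  rw [Function.onFun, QuadraticMap.polarBilin_apply_apply, hQ.polar_eq_mink,
    mink_single_single_of_ne h, mul_zero]

theorem IsMinkowski.ι_mul_self_of_mem_hyp (hQ : IsMinkowski Q) {x : Fin (n + 1) → ℝ}
    (hx : x ∈ Hyp n) : ι Q x * ι Q x = 1 := by
  rw [ι_sq_scalar, hQ.apply_eq_mink, hx.1, map_one]

theorem IsMinkowski.gen_mul_self (hQ : IsMinkowski Q) (i : Fin (n + 1)) :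
    gen Q i * gen Q i = algebraMap ℝ _ (if i = 0 then 1 else -1) := by
  rw [gen, ι_sq_scalar, hQ.apply_single]

theorem IsMinkowski.gen_zero_mul_self (hQ : IsMinkowski Q) : gen Q 0 * gen Q 0 = 1 := by
  rw [hQ.gen_mul_self, if_pos rfl, map_one]

theorem IsMinkowski.gen_mul_gen_zero_mul_gen (hQ : IsMinkowski Q) (a : Fin (n + 1)) :
    gen Q a * gen Q 0 * gen Q a = gen Q 0 := by
  rcases eq_or_ne a 0 with rfl | ha
  · rw [hQ.gen_zero_mul_self, one_mul]
  · rw [gen_mul_gen_comm hQ.isOrthoᵢ_single ha, neg_mul, mul_assoc, hQ.gen_mul_self, if_neg ha,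
      map_neg, map_one, mul_neg_one, neg_neg]

theorem IsMinkowski.conj_reverse_blade_mul_blade (hQ : IsMinkowski Q) (hb : IsBladeBasis b)
    (M : Finset (Fin (n + 1))) : gen Q 0 * reverse (b M) * gen Q 0 * b M = 1 := by
  induction M using Finset.induction_on_min with
  | empty => rw [hb.blade_empty, reverse.map_one, mul_one, mul_one, hQ.gen_zero_mul_self]
  | insert a M ha ih =>
    rw [hb.blade_insert ha, reverse.map_mul, reverse_gen]
    calc gen Q 0 * (reverse (b M) * gen Q a) * gen Q 0 * (gen Q a * b M)
        = gen Q 0 * reverse (b M) * (gen Q a * gen Q 0 * gen Q a) * b M := by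
          simp only [mul_assoc]
      _ = 1 := by rw [hQ.gen_mul_gen_zero_mul_gen, ih]

theorem IsMinkowski.exists_conj_reverse_blade (hQ : IsMinkowski Q) (hb : IsBladeBasis b)
    (M : Finset (Fin (n + 1))) : ∃ c : ℝ, gen Q 0 * reverse (b M) * gen Q 0 = c • b M := by
  obtain ⟨c₁, h₁⟩ := reverse_blade hQ.isOrthoᵢ_single hb M
  obtain ⟨c₂, h₂⟩ := blade_mul_blade hQ.isOrthoᵢ_single hb {0} M
  obtain ⟨c₃, h₃⟩ := blade_mul_blade hQ.isOrthoᵢ_single hb (symmDiff {0} M) {0}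
  refine ⟨c₁ * c₂ * c₃, ?_⟩
  rw [h₁, mul_smul_comm, smul_mul_assoc, ← hb.blade_singleton, h₂, smul_mul_assoc, h₃,
    symmDiff_symmDiff_self', smul_smul, smul_smul, mul_assoc]

theorem IsMinkowski.scalarPart_conj_reverse_blade_mul_blade (hQ : IsMinkowski Q)
    (hb : IsBladeBasis b) (M N : Finset (Fin (n + 1))) :
    scalarPart b (gen Q 0 * reverse (b M) * gen Q 0 * b N) = if M = N then 1 else 0 := by
  split_ifs with h
  · rw [h, hQ.conj_reverse_blade_mul_blade hb, scalarPart_one hb]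
  · obtain ⟨c, hc⟩ := hQ.exists_conj_reverse_blade hb M
    rw [hc, smul_mul_assoc, map_smul, scalarPart_blade_mul_blade hQ.isOrthoᵢ_single hb h,
      smul_zero]

theorem IsMinkowski.scalarPart_conj_reverse_mul_self_nonneg (hQ : IsMinkowski Q)
    (hb : IsBladeBasis b) (w : CliffordAlgebra Q) :
    0 ≤ scalarPart b (gen Q 0 * reverse w * gen Q 0 * w) := by
  have hsum : scalarPart b (gen Q 0 * reverse w * gen Q 0 * w) =
      ∑ M, b.repr w M * b.repr w M := by
    conv_lhs => rw [← b.sum_repr w]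
    simp only [map_sum, map_smul, Finset.mul_sum, Finset.sum_mul, smul_mul_assoc, mul_smul_comm,
      hQ.scalarPart_conj_reverse_blade_mul_blade hb, smul_eq_mul, mul_ite, mul_one, mul_zero,
      Finset.sum_ite_eq', Finset.mem_univ, if_true]
  rw [hsum]
  exact Finset.sum_nonneg fun M _ => mul_self_nonneg _

theorem IsMinkowski.one_add_mul_gen_zero_mul_one_add (hQ : IsMinkowski Q)
    {x : Fin (n + 1) → ℝ} (hx : Q x = 1) :
    (1 + ι Q x * gen Q 0) * gen Q 0 * (1 + gen Q 0 * ι Q x) = (2 + 2 * x 0) • ι Q x := by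
  set X := ι Q x
  set E := gen Q 0
  have hEE : E * E = 1 := hQ.gen_zero_mul_self
  have hXX : X * X = 1 := by rw [ι_sq_scalar, hx, map_one]
  have hEX : E * X = algebraMap ℝ _ (2 * x 0) - X * E := by
    have h := ι_mul_ι_add_swap (Q := Q) x (Pi.single 0 1)
    rw [hQ.polar_eq_mink, mink_single_zero] at h
    exact eq_sub_of_add_eq' h
  have hXEX : X * (E * X) = (2 * x 0) • X - E := by
    rw [hEX, mul_sub, ← mul_assoc, hXX, one_mul, ← Algebra.commutes, ← Algebra.smul_def]
  have hE (z : CliffordAlgebra Q) : E * (E * z) = z := by rw [← mul_assoc, hEE, one_mul]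
  simp only [add_mul, mul_add, one_mul, mul_one, mul_assoc, hE, hEE, hXEX]
  module

theorem IsMinkowski.scalarPart_conj_reverse_mul_nonneg (hQ : IsMinkowski Q)
    (hb : IsBladeBasis b) {x : Fin (n + 1) → ℝ} (hx : x ∈ Hyp n) (u : CliffordAlgebra Q) :
    0 ≤ scalarPart b (ι Q x * reverse u * ι Q x * u) := by
  set v := 1 + ι Q x * gen Q 0
  set k := 2 + 2 * x 0
  have hrot : v * gen Q 0 * reverse v = k • ι Q x := by
    rw [map_add, reverse.map_one, reverse.map_mul, reverse_ι, reverse_gen]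
    exact hQ.one_add_mul_gen_zero_mul_one_add (by rw [hQ.apply_eq_mink, hx.1])
  have hk : 0 < k := by linarith [hx.2]
  have hscale : (k • ι Q x) * reverse u * (k • ι Q x) * u =
      k ^ 2 • (ι Q x * reverse u * ι Q x * u) := by
    simp only [smul_mul_assoc, mul_smul_comm, smul_smul, sq]
  have hconj : k ^ 2 * scalarPart b (ι Q x * reverse u * ι Q x * u) =
      scalarPart b (gen Q 0 * reverse (reverse v * u * v) * gen Q 0 * (reverse v * u * v)) :=
    calc k ^ 2 * scalarPart b (ι Q x * reverse u * ι Q x * u)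
        = scalarPart b (v * gen Q 0 * reverse v * reverse u * (v * gen Q 0 * reverse v) * u) := by
          rw [hrot, hscale, map_smul, smul_eq_mul]
      _ = scalarPart b (v * (gen Q 0 * reverse v * reverse u * v * gen Q 0 * reverse v * u)) := by
          simp only [mul_assoc]
      _ = _ := by
          rw [scalarPart_mul_comm hQ.isOrthoᵢ_single hb]
          simp only [reverse.map_mul, reverse_reverse, mul_assoc]
  exact nonneg_of_mul_nonneg_right
    (hconj ▸ hQ.scalarPart_conj_reverse_mul_self_nonneg hb _) (by positivity)

theorem IsMinkowski.scalarPart_mul_reverse_nonneg (hQ : IsMinkowski Q) (hb : IsBladeBasis b)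
    {x : Fin (n + 1) → ℝ} (hx : x ∈ Hyp n) {u : CliffordAlgebra Q}
    (hu : ι Q x * u * ι Q x = u) :
    0 ≤ scalarPart b (u * reverse u) := by
  calc 0 ≤ scalarPart b (ι Q x * reverse u * ι Q x * u) :=
        hQ.scalarPart_conj_reverse_mul_nonneg hb hx u
    _ = scalarPart b (reverse u * (ι Q x * u * ι Q x)) := by
      rw [mul_assoc (ι Q x * reverse u), mul_assoc,
        scalarPart_mul_comm hQ.isOrthoᵢ_single hb (ι Q x)]
      simp only [mul_assoc]
    _ = scalarPart b (u * reverse u) := by rw [hu, scalarPart_mul_comm hQ.isOrthoᵢ_single hb]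

theorem IsMinkowski.sq_scalarPart_le (hQ : IsMinkowski Q) (hb : IsBladeBasis b)
    {x : Fin (n + 1) → ℝ} (hx : x ∈ Hyp n) {u : CliffordAlgebra Q}
    (hu : ι Q x * u * ι Q x = u) :
    scalarPart b u ^ 2 ≤ scalarPart b (u * reverse u) := by
  obtain ⟨α, hα⟩ : ∃ α, scalarPart b u = α := ⟨_, rfl⟩
  have hX : ι Q x * ι Q x = 1 := hQ.ι_mul_self_of_mem_hyp hx
  have hv : ι Q x * (u - α • 1) * ι Q x = u - α • 1 := by
    rw [mul_sub, sub_mul, hu, mul_smul_comm, smul_mul_assoc, mul_one, hX]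
  have hexpand : (u - α • 1) * reverse (u - α • 1) =
      u * reverse u - α • u - α • reverse u + (α * α) • 1 := by
    simp only [map_sub, map_smul, reverse.map_one, mul_sub, sub_mul, mul_smul_comm, smul_mul_assoc,
      mul_one, one_mul]
    module
  have := hQ.scalarPart_mul_reverse_nonneg hb hx hv
  rw [hexpand, map_add, map_sub, map_sub, map_smul, map_smul, map_smul,
    scalarPart_reverse hQ.isOrthoᵢ_single hb, scalarPart_one hb, hα] at this
  simp only [smul_eq_mul] at this
  rw [hα]
  linarith

theorem IsMinkowski.two_mul_sq_scalarPart_sub_one_le_mink (hQ : IsMinkowski Q)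
    (hb : IsBladeBasis b) {s : CliffordAlgebra Q} (hs : s * reverse s = 1)
    {x y : Fin (n + 1) → ℝ} (hx : x ∈ Hyp n) (hy : ι Q y = s * ι Q x * reverse s) :
    2 * scalarPart b s ^ 2 - 1 ≤ mink x y := by
  set e := ι Q x
  have he : e * e = 1 := hQ.ι_mul_self_of_mem_hyp hx
  have he' : ∀ z, e * (e * z) = z := fun z => by rw [← mul_assoc, he, one_mul]
  have hnorm : scalarPart b ((s + e * s * e) * reverse (s + e * s * e)) = 2 + 2 * mink x y := by
    rw [scalarPart_add_conj_mul_reverse hQ.isOrthoᵢ_single hb he (reverse_ι x), hs, ← hy,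
      ι_mul_ι_add_swap, hQ.polar_eq_mink, scalarPart_algebraMap hb, scalarPart_one hb]
    ring
  have hreal : scalarPart b (s + e * s * e) = 2 * scalarPart b s := by
    rw [map_add, scalarPart_mul_comm hQ.isOrthoᵢ_single hb, ← mul_assoc, he, one_mul, two_mul]
  have hconj : e * (s + e * s * e) * e = s + e * s * e := by
    simp only [mul_add, add_mul, mul_assoc, he', he, mul_one]
    abel
  have := hQ.sq_scalarPart_le hb hx hconj
  rw [hreal, hnorm] at this
  linarith

end Minkowski

end CliffordBlade

theorem displacement_ge_two_log_real_part_general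
    (n : ℕ) (Q : QuadraticForm ℝ (Fin (n + 1) → ℝ))
    (hQ : ∀ x, Q x = x 0 ^ 2 - ∑ i : Fin n, x i.succ ^ 2)
    (b : Module.Basis (Finset (Fin (n + 1))) ℝ (CliffordAlgebra Q))
    (hb : ∀ M : Finset (Fin (n + 1)),
      b M = ((M.sort (· ≤ ·)).map fun i => ι Q (Pi.single i 1)).prod)
    (s : CliffordAlgebra Q)
    (hsnorm : s * reverse s = 1)
    (hreal : 1 ≤ |b.repr s ∅|)
    (x : Fin (n + 1) → ℝ) (hx : x ∈ Hyp n)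
    (y : Fin (n + 1) → ℝ)
    (hy : ι Q y = s * ι Q x * reverse s) :
    2 * Real.log |b.repr s ∅| ≤ hdist x y :=
  two_mul_log_abs_le_log_add_sqrt hreal
    (CliffordBlade.IsMinkowski.two_mul_sq_scalarPart_sub_one_le_mink hQ hb hsnorm hx hy)

/-- For `s ∈ Spin(1,n)` with real part `|s_ℝ| ≥ 1` and any `x ∈ H^n`, the displacement of
`x` under the isometry `φ_s(x) = s x s*` satisfies `d(x, φ_s(x)) ≥ 2 log |s_ℝ|`. -/
theorem displacement_ge_two_log_real_part
    (n : ℕ) (Q : QuadraticForm ℝ (Fin (n + 1) → ℝ))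
    (hQ : ∀ x, Q x = x 0 ^ 2 - ∑ i : Fin n, x i.succ ^ 2)
    (b : Module.Basis (Finset (Fin (n + 1))) ℝ (CliffordAlgebra Q))
    (hb : ∀ M : Finset (Fin (n + 1)),
      b M = ((M.sort (· ≤ ·)).map fun i => ι Q (Pi.single i 1)).prod)
    (s : CliffordAlgebra Q)
    (hseven : s ∈ evenOdd Q 0)
    (hsnorm : s * reverse s = 1)
    (hsE : ∀ v : Fin (n + 1) → ℝ, ∃ w, s * ι Q v * reverse s = ι Q w)
    (hreal : 1 ≤ |b.repr s ∅|)
    (x : Fin (n + 1) → ℝ) (hx : x ∈ Hyp n)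
    (y : Fin (n + 1) → ℝ)
    (hy : ι Q y = s * ι Q x * reverse s) :
    2 * Real.log |b.repr s ∅| ≤ hdist x y :=
  displacement_ge_two_log_real_part_general n Q hQ b hb s hsnorm hreal x hx y hy
end

section
/- Let k be a totally real number field of degree d over ℚ with ring of integers O_k, and let I ⊂ O_k be a nonzero ideal. If y ∈ O_k is nonzero, 2y ∈ I², and |σ(y)| ≤ 2 for all nontrivial real embeddings σ of k, then |y| ≥ N(I)²/2^{2d−1}, where N(I) = |O_k/I| and |y| denotes the absolute value of y under the distinguished real embedding. -/
/-!
The ideal `(2y)` lies in `I²`, so `N(I)² ≤ |N(2y)| = 2^d ∏_σ |σ(y)|`, the product running over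
the `d` real embeddings, which are all the complex embeddings since `k` is totally real.
Bounding the `d - 1` factors with `σ ≠ σ₀` by `2` leaves `N(I)² ≤ 2^d · 2^(d-1) · |σ₀(y)|`.
-/

open NumberField Finset

theorem Finset.prod_le_mul_pow_card_sub_one {ι R : Type*} [CommMonoidWithZero R] [Preorder R]
    [ZeroLEOneClass R] [PosMulMono R] {s : Finset ι} {f : ι → R} {i : ι} {c : R} (hi : i ∈ s)
    (hf : ∀ j ∈ s, 0 ≤ f j) (hc : ∀ j ∈ s, j ≠ i → f j ≤ c) :
    ∏ j ∈ s, f j ≤ f i * c ^ (#s - 1) := by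
  classical
  rw [← mul_prod_erase s f hi, ← card_erase_of_mem hi, ← prod_const]
  exact mul_le_mul_of_nonneg_left (prod_le_prod (fun j hj ↦ hf j (mem_of_mem_erase hj))
    fun j hj ↦ hc j (mem_of_mem_erase hj) (ne_of_mem_erase hj)) (hf i hi)

theorem Ideal.absNorm_pow_le_natAbs_norm_of_mem_pow {S : Type*} [CommRing S] [IsDedekindDomain S]
    [Module.Free ℤ S] [Module.Finite ℤ S] {I : Ideal S} {n : ℕ} {x : S} (hx : x ∈ I ^ n)
    (hx0 : x ≠ 0) : absNorm I ^ n ≤ (Algebra.norm ℤ x).natAbs := by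
  rw [← map_pow]
  exact Nat.le_of_dvd (Int.natAbs_pos.mpr (Algebra.norm_ne_zero_iff.mpr hx0))
    (Int.natCast_dvd.mp (absNorm_dvd_norm_of_mem hx))

theorem NumberField.abs_norm_eq_prod_realEmbeddings {k : Type*} [Field k] [NumberField k]
    (hk : Fintype.card (k →+* ℝ) = Module.finrank ℚ k) (x : k) :
    |(Algebra.norm ℚ x : ℝ)| = ∏ σ : k →+* ℝ, |σ x| := by
  classical
  have hinj : Function.Injective (Complex.ofRealHom.comp : (k →+* ℝ) → (k →+* ℂ)) :=
    fun σ τ h ↦ RingHom.ext fun x ↦ Complex.ofReal_injective (RingHom.congr_fun h x)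
  have hbij := (Fintype.bijective_iff_injective_and_card _).mpr
    ⟨hinj, by rw [hk, Embeddings.card k ℂ]⟩
  rw [Fintype.prod_bijective _ hbij (fun σ ↦ |σ x|) (fun φ ↦ ‖φ x‖)
      fun σ ↦ by simp [Complex.norm_real],
    Fintype.prod_equiv (RingHom.equivRatAlgHom k ℂ) (fun φ ↦ ‖φ x‖) (fun φ ↦ ‖φ x‖)
      fun _ ↦ by simp [RingHom.equivRatAlgHom_apply],
    ← norm_prod, ← Algebra.norm_eq_prod_embeddings ℚ ℂ x, eq_ratCast]
  simp

theorem abs_ge_norm_sq_of_two_mem_sq_general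
    (k : Type*) [Field k] [NumberField k] (d : ℕ)
    (hd : Module.finrank ℚ k = d)
    (hreal : Fintype.card (k →+* ℝ) = d)
    (σ₀ : k →+* ℝ)
    (I : Ideal (𝓞 k))
    (y : 𝓞 k) (hy : y ≠ 0)
    (h2y : 2 * y ∈ I ^ 2)
    (hσ : ∀ σ : k →+* ℝ, σ ≠ σ₀ → |σ (y : k)| ≤ 2) :
    (Ideal.absNorm I : ℝ) ^ 2 / 2 ^ (2 * d - 1) ≤ |σ₀ (y : k)| := by
  have hd_pos : 0 < d := hreal ▸ Fintype.card_pos_iff.mpr ⟨σ₀⟩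
  have hnorm : (Ideal.absNorm I : ℝ) ^ 2 ≤ 2 ^ d * ∏ σ : k →+* ℝ, |σ (y : k)| :=
    calc (Ideal.absNorm I : ℝ) ^ 2 ≤ |(Algebra.norm ℚ ((2 * y : 𝓞 k) : k) : ℝ)| := by
          rw [← Algebra.coe_norm_int, Rat.cast_intCast, ← Int.cast_abs, Int.abs_eq_natAbs]
          exact_mod_cast
            Ideal.absNorm_pow_le_natAbs_norm_of_mem_pow h2y (mul_ne_zero two_ne_zero hy)
      _ = ∏ σ : k →+* ℝ, |σ ((2 * y : 𝓞 k) : k)| :=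
          abs_norm_eq_prod_realEmbeddings (hreal.trans hd.symm) _
      _ = 2 ^ d * ∏ σ : k →+* ℝ, |σ (y : k)| := by
          simp [map_ofNat, prod_mul_distrib, hreal]
  have hrest : ∏ σ : k →+* ℝ, |σ (y : k)| ≤ |σ₀ (y : k)| * 2 ^ (d - 1) := by
    simpa [hreal] using prod_le_mul_pow_card_sub_one (mem_univ σ₀)
      (fun σ _ ↦ abs_nonneg (σ (y : k))) fun σ _ ↦ hσ σ
  rw [div_le_iff₀ (by positivity)]
  calc (Ideal.absNorm I : ℝ) ^ 2 ≤ 2 ^ d * (|σ₀ (y : k)| * 2 ^ (d - 1)) :=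
      hnorm.trans (by gcongr)
    _ = |σ₀ (y : k)| * 2 ^ (2 * d - 1) := by
      rw [show 2 * d - 1 = d + (d - 1) by omega, pow_add]; ring

/-- Let `k` be a totally real number field of degree `d` with ring of integers `O_k`,
distinguished real embedding `σ₀`, and let `I ⊂ O_k` be a nonzero ideal.  If `y ∈ O_k` is
nonzero, `2y ∈ I²`, and `|σ(y)| ≤ 2` for every nontrivial real embedding `σ`, then
`|σ₀(y)| ≥ N(I)²/2^{2d−1}`. -/
theorem abs_ge_norm_sq_of_two_mem_sq
    (k : Type*) [Field k] [NumberField k] (d : ℕ)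
    (hd : Module.finrank ℚ k = d)
    (hreal : Fintype.card (k →+* ℝ) = d)
    (σ₀ : k →+* ℝ)
    (I : Ideal (𝓞 k)) (hI : I ≠ ⊥)
    (y : 𝓞 k) (hy : y ≠ 0)
    (h2y : 2 * y ∈ I ^ 2)
    (hσ : ∀ σ : k →+* ℝ, σ ≠ σ₀ → |σ (y : k)| ≤ 2) :
    (Ideal.absNorm I : ℝ) ^ 2 / 2 ^ (2 * d - 1) ≤ |σ₀ (y : k)| :=
  abs_ge_norm_sq_of_two_mem_sq_general k d hd hreal σ₀ I y hy h2y hσ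
end
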